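/- arXiv:1901.07245 — 4 statements merged into one kernel-verified Lean document; each statement's English description precedes it below -/
import Mathlib

section
/- The function φ(z) = exp(-(1-z)^{-θ}), defined for z in the closed unit disk with z ≠ 1 and extended by φ(1) = 0, is continuous on the closed unit disk and holomorphic on the open unit disk; in particular lim_{z→1, |z|≤1} φ(z) = 0. -/
open Complex Metric

theorem stmt_1 (θ : ℝ) (hθ0 : 0 < θ) (hθ1 : θ < 1) (φ : ℂ → ℂ)
    (hφ : ∀ z, φ z = if z = 1 then 0 else Complex.exp (-((1 - z) ^ (-(θ : ℂ))))) :
    ContinuousOn φ (closedBall (0 : ℂ) 1) ∧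
    DifferentiableOn ℂ φ (ball (0 : ℂ) 1) ∧
    Filter.Tendsto φ (nhdsWithin 1 (closedBall (0 : ℂ) 1 \ {1})) (nhds 0) := by
  have hπ := Real.pi_pos
  set c := Real.cos (θ * (Real.pi / 2)) with hc
  have hcpos : 0 < c := Real.cos_pos_of_mem_Ioo ⟨by nlinarith, by nlinarith⟩
  -- positivity of the real part of 1 - z
  have hre : ∀ z : ℂ, ‖z‖ ≤ 1 → z ≠ 1 → 0 < (1 - z).re := by
    intro z hz hz1
    have h2 : z.re ^ 2 + z.im ^ 2 ≤ 1 := by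
      have h3 : ‖z‖ ^ 2 ≤ 1 := by nlinarith [norm_nonneg z]
      rw [Complex.sq_norm, Complex.normSq_apply] at h3
      nlinarith
    simp only [Complex.sub_re, Complex.one_re, sub_pos]
    by_contra h
    push_neg at h
    have him : z.im = 0 := by nlinarith
    have hre1 : z.re = 1 := by nlinarith
    exact hz1 (Complex.ext (by simpa using hre1) (by simpa using him))
  -- norm bound
  have hnormle : ∀ z : ℂ, z ≠ 1 → 0 < (1 - z).re →
      ‖φ z‖ ≤ Real.exp (-(‖1 - z‖ ^ (-θ) * c)) := by
    intro z hz1 hrez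
    have hw0 : (1 : ℂ) - z ≠ 0 := sub_ne_zero.mpr (Ne.symm hz1)
    have ha : 0 < ‖1 - z‖ := norm_pos_iff.mpr hw0
    have hcp : ((1 - z) ^ (-(θ : ℂ))).re
        = ‖1 - z‖ ^ (-θ) * Real.cos (θ * Complex.arg (1 - z)) := by
      rw [Complex.cpow_def_of_ne_zero hw0, Complex.exp_re]
      simp only [Complex.mul_re, Complex.mul_im, Complex.neg_re, Complex.neg_im,
        Complex.ofReal_re, Complex.ofReal_im, Complex.log_re, Complex.log_im,
        mul_zero, sub_zero, zero_mul, add_zero]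
      rw [Real.rpow_def_of_pos ha]
      rw [show Real.log (‖1 - z‖) * -0 + (1 - z).arg * -θ
        = -(θ * (1 - z).arg) by ring, Real.cos_neg]
      ring_nf
    rw [hφ z, if_neg hz1, Complex.norm_exp, Complex.neg_re, hcp]
    apply Real.exp_le_exp.mpr
    apply neg_le_neg
    apply mul_le_mul_of_nonneg_left _ (Real.rpow_nonneg ha.le _)
    -- c ≤ cos (θ * arg (1-z))
    have harg : |Complex.arg (1 - z)| ≤ Real.pi / 2 :=
      Complex.abs_arg_le_pi_div_two_iff.mpr hrez.le
    have h1 : |θ * Complex.arg (1 - z)| ≤ θ * (Real.pi / 2) := by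
      rw [abs_mul, abs_of_pos hθ0]
      exact mul_le_mul_of_nonneg_left harg hθ0.le
    calc c ≤ Real.cos |θ * Complex.arg (1 - z)| :=
          Real.cos_le_cos_of_nonneg_of_le_pi (abs_nonneg _) (by nlinarith) h1
      _ = Real.cos (θ * Complex.arg (1 - z)) := Real.cos_abs _
  -- the key limit
  have key : Filter.Tendsto φ (nhdsWithin 1 (closedBall (0 : ℂ) 1 \ {1})) (nhds 0) := by
    rw [tendsto_zero_iff_norm_tendsto_zero]
    have habs : Filter.Tendsto (fun z : ℂ => ‖1 - z‖)
        (nhdsWithin 1 (closedBall (0 : ℂ) 1 \ {1})) (nhdsWithin 0 (Set.Ioi 0)) := by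
      apply tendsto_nhdsWithin_of_tendsto_nhds_of_eventually_within
      · have hco : Continuous fun z : ℂ => ‖1 - z‖ := by
          exact continuous_norm.comp (continuous_const.sub continuous_id)
        have := (hco.tendsto 1).mono_left (nhdsWithin_le_nhds (s := closedBall (0:ℂ) 1 \ {1}))
        simpa using this
      · filter_upwards [self_mem_nhdsWithin] with z hz
        have hz1 : z ≠ 1 := hz.2
        exact norm_pos_iff.mpr (sub_ne_zero.mpr (Ne.symm hz1))
    have hpow : Filter.Tendsto (fun x : ℝ => x ^ (-θ)) (nhdsWithin 0 (Set.Ioi 0))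
        Filter.atTop := by
      have h1 : Filter.Tendsto (fun x : ℝ => (x⁻¹) ^ θ) (nhdsWithin 0 (Set.Ioi 0))
          Filter.atTop := (tendsto_rpow_atTop hθ0).comp tendsto_inv_nhdsGT_zero
      refine h1.congr' ?_
      filter_upwards [self_mem_nhdsWithin] with x hx
      rw [Real.inv_rpow (le_of_lt hx), ← Real.rpow_neg (le_of_lt hx)]
    have hexp : Filter.Tendsto (fun A : ℝ => Real.exp (-(A * c))) Filter.atTop (nhds 0) := by
      apply Real.tendsto_exp_atBot.comp
      exact Filter.tendsto_neg_atTop_atBot.comp (Filter.Tendsto.atTop_mul_const hcpos Filter.tendsto_id)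
    apply squeeze_zero' (Filter.Eventually.of_forall fun z => norm_nonneg _)
      _ (hexp.comp (hpow.comp habs))
    filter_upwards [self_mem_nhdsWithin] with z hz
    have hz1 : z ≠ 1 := hz.2
    have hzb : ‖z‖ ≤ 1 := by
      have := hz.1
      simpa using mem_closedBall_zero_iff.mp this
    exact hnormle z hz1 (hre z hzb hz1)
  -- differentiability
  have hdiff : DifferentiableOn ℂ φ (ball (0 : ℂ) 1) := by
    intro z hz
    have hzb : ‖z‖ < 1 := by
      simpa using mem_ball_zero_iff.mp hz
    have hz1 : z ≠ 1 := by
      intro h; rw [h] at hzb; simp at hzb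
    have hrez : 0 < (1 - z).re := hre z hzb.le hz1
    have hf : DifferentiableAt ℂ (fun w => Complex.exp (-((1 - w) ^ (-(θ : ℂ))))) z := by
      apply DifferentiableAt.cexp
      apply DifferentiableAt.neg
      apply DifferentiableAt.cpow
      · exact (differentiableAt_const _).sub differentiableAt_id
      · exact differentiableAt_const _
      · exact Complex.mem_slitPlane_iff.mpr (Or.inl hrez)
    have heq : (fun w => Complex.exp (-((1 - w) ^ (-(θ : ℂ))))) =ᶠ[nhds z] φ := by
      filter_upwards [IsOpen.mem_nhds isOpen_ne hz1] with w hw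
      rw [hφ w, if_neg hw]
    exact (hf.congr_of_eventuallyEq heq.symm).differentiableWithinAt
  -- continuity
  have hcont : ContinuousOn φ (closedBall (0 : ℂ) 1) := by
    intro z hz
    by_cases hz1 : z = 1
    · subst hz1
      rw [← continuousWithinAt_diff_self]
      unfold ContinuousWithinAt
      rw [hφ 1, if_pos rfl]
      exact key
    · have hzb : ‖z‖ ≤ 1 := by
        simpa using mem_closedBall_zero_iff.mp hz
      have hrez : 0 < (1 - z).re := hre z hzb hz1
      have hf : ContinuousAt (fun w => Complex.exp (-((1 - w) ^ (-(θ : ℂ))))) z := by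
        apply ContinuousAt.cexp
        apply ContinuousAt.neg
        apply ContinuousAt.cpow
        · exact (continuous_const.sub continuous_id).continuousAt
        · exact continuousAt_const
        · exact Complex.mem_slitPlane_iff.mpr (Or.inl hrez)
      have heq : (fun w => Complex.exp (-((1 - w) ^ (-(θ : ℂ))))) =ᶠ[nhds z] φ := by
        filter_upwards [IsOpen.mem_nhds isOpen_ne hz1] with w hw
        rw [hφ w, if_neg hw]
      exact (hf.congr heq).continuousWithinAt
  exact ⟨hcont, hdiff, key⟩
end

section
/- Suppose χ : D → D satisfies |1 - χ(z)| ≤ K(1 - |χ(z)|) for all z ∈ D with K ≥ 1, and let φ(z) = exp(-(1-z)^{-θ}) with 0 < θ < 1 and δ = cos(πθ/2). Then there exists 0 < c < 1 such that |χ(z)| + 2c|φ(χ(z))| < 1 for all z ∈ D. -/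
open Complex Metric

theorem stmt_2 (θ : ℝ) (hθ0 : 0 < θ) (hθ1 : θ < 1) (K : ℝ) (hK : 1 ≤ K)
    (χ : ℂ → ℂ) (hχ : ∀ z ∈ ball (0 : ℂ) 1, χ z ∈ ball (0 : ℂ) 1)
    (hχK : ∀ z ∈ ball (0 : ℂ) 1, ‖1 - χ z‖ ≤ K * (1 - ‖χ z‖)) :
    ∃ c : ℝ, 0 < c ∧ c < 1 ∧
      ∀ z ∈ ball (0 : ℂ) 1,
        ‖χ z‖ + 2 * c * ‖Complex.exp (-((1 - χ z) ^ (-(θ : ℂ))))‖ < 1 := by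
  set π := Real.pi
  have hπ : 0 < π := Real.pi_pos
  set δ : ℝ := Real.cos (θ * (π / 2)) with hδdef
  have hδpos : 0 < δ := by
    apply Real.cos_pos_of_mem_Ioo
    constructor <;> nlinarith
  set n : ℕ := ⌈1/θ⌉₊ with hndef
  have hn1 : (1:ℝ) ≤ n * θ := by
    have : (1/θ : ℝ) ≤ n := Nat.le_ceil _
    calc (1:ℝ) = (1/θ) * θ := by field_simp
    _ ≤ n * θ := by nlinarith
  set A : ℝ := ((n.factorial : ℝ) / δ^n) * 2 ^ ((n:ℝ) * θ - 1) with hAdef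
  have hApos : 0 < A := by
    apply mul_pos
    · exact div_pos (by exact_mod_cast n.factorial_pos) (pow_pos hδpos n)
    · exact Real.rpow_pos_of_pos (by norm_num) _
  set c : ℝ := 1/(2*K*A+2) with hcdef
  have hden : 0 < 2*K*A+2 := by positivity
  have hc0 : 0 < c := by positivity
  have hcden : c * (2*K*A+2) = 1 := by
    rw [hcdef]; exact one_div_mul_cancel hden.ne'
  refine ⟨c, hc0, ?_, ?_⟩
  · rw [hcdef, div_lt_one hden]; nlinarith
  intro z hz
  have hχz := hχ z hz
  rw [mem_ball_zero_iff] at hχz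
  have hχKz := hχK z hz
  set w : ℂ := 1 - χ z with hwdef
  set X : ℝ := ‖w‖ with hXdef
  have hwne : w ≠ 0 := by
    intro h
    have h1 : χ z = 1 := (sub_eq_zero.mp h).symm
    rw [h1] at hχz; norm_num at hχz
  have hX0 : 0 < X := norm_pos_iff.mpr hwne
  have hX2 : X ≤ 2 := by
    calc X ≤ ‖(1:ℂ)‖ + ‖χ z‖ := norm_sub_le _ _
    _ ≤ 2 := by rw [norm_one]; linarith
  have hwre : 0 < w.re := by
    have h0 : |(χ z).re| ≤ ‖χ z‖ := Complex.abs_re_le_norm _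
    have h1 : (χ z).re < 1 := by
      cases' abs_le.mp h0 with h h; linarith
    simp only [hwdef, Complex.sub_re, Complex.one_re]
    linarith
  have harg : |Complex.arg w| < π / 2 :=
    Complex.abs_arg_lt_pi_div_two_iff.mpr (Or.inl hwre)
  have hre : (w ^ (-(θ:ℂ))).re = X ^ (-θ) * Real.cos (θ * Complex.arg w) := by
    rw [Complex.cpow_def_of_ne_zero hwne, Complex.exp_re]
    have h1 : (Complex.log w * (-(θ:ℂ))).re = Real.log X * (-θ) := by
      simp only [Complex.mul_re, Complex.log_re, Complex.log_im, Complex.neg_re,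
        Complex.ofReal_re, Complex.neg_im, Complex.ofReal_im, neg_zero, mul_zero, sub_zero]
      rfl
    have h2 : (Complex.log w * (-(θ:ℂ))).im = Complex.arg w * (-θ) := by
      simp only [Complex.mul_im, Complex.log_re, Complex.log_im, Complex.neg_re,
        Complex.ofReal_re, Complex.neg_im, Complex.ofReal_im, neg_zero, mul_zero, zero_add]
    rw [h1, h2, Real.rpow_def_of_pos hX0]
    rw [show Complex.arg w * (-θ) = -(θ * Complex.arg w) by ring, Real.cos_neg]
  have hcos : δ ≤ Real.cos (θ * Complex.arg w) := by
    rw [← Real.cos_abs (θ * Complex.arg w)]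
    apply Real.cos_le_cos_of_nonneg_of_le_pi
    · positivity
    · nlinarith
    · rw [abs_mul, abs_of_pos hθ0]
      nlinarith [abs_nonneg (Complex.arg w)]
  have hXθpos : (0:ℝ) < X ^ (-θ) := Real.rpow_pos_of_pos hX0 _
  have hnorm : ‖Complex.exp (-(w ^ (-(θ:ℂ))))‖ ≤ Real.exp (-(δ * X ^ (-θ))) := by
    rw [Complex.norm_exp]
    apply Real.exp_le_exp.mpr
    rw [Complex.neg_re, hre]
    nlinarith
  set t : ℝ := δ * X ^ (-θ) with htdef
  have ht : 0 < t := mul_pos hδpos hXθpos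
  have htn : 0 < t ^ n := pow_pos ht n
  have h1 : t ^ n / n.factorial ≤ Real.exp t := Real.pow_div_factorial_le_exp _ ht.le n
  have hfac : (0:ℝ) < n.factorial := by exact_mod_cast n.factorial_pos
  have h2 : Real.exp (-t) ≤ (n.factorial : ℝ) / t ^ n := by
    rw [Real.exp_neg]
    rw [inv_le_comm₀ (Real.exp_pos t) (by positivity)]
    calc ((n.factorial : ℝ) / t ^ n)⁻¹ = t ^ n / n.factorial := by
          rw [inv_div]
    _ ≤ Real.exp t := h1
  have hpow : t ^ n = δ^n * X ^ (-θ * n) := by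
    rw [htdef, mul_pow, ← Real.rpow_natCast (X ^ (-θ)) n, ← Real.rpow_mul hX0.le]
  have h3 : (n.factorial : ℝ) / t ^ n = ((n.factorial : ℝ) / δ^n) * X ^ ((n:ℝ) * θ) := by
    rw [hpow, show (-θ * n : ℝ) = -((n:ℝ)*θ) by ring, Real.rpow_neg hX0.le]
    have : X ^ ((n:ℝ)*θ) ≠ 0 := (Real.rpow_pos_of_pos hX0 _).ne'
    field_simp
  have h4 : X ^ ((n:ℝ) * θ) = X ^ ((n:ℝ) * θ - 1) * X := by
    have h := Real.rpow_add hX0 ((n:ℝ)*θ-1) 1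
    rw [Real.rpow_one] at h
    rw [show (n:ℝ)*θ = (n:ℝ)*θ-1+1 by ring, h]
    norm_num
  have h5 : X ^ ((n:ℝ) * θ - 1) ≤ 2 ^ ((n:ℝ) * θ - 1) :=
    Real.rpow_le_rpow hX0.le hX2 (by linarith)
  have hexp_bound : Real.exp (-t) ≤ A * X := by
    rw [hAdef]
    calc Real.exp (-t) ≤ (n.factorial : ℝ) / t ^ n := h2
    _ = ((n.factorial : ℝ) / δ^n) * (X ^ ((n:ℝ) * θ - 1) * X) := by rw [h3, h4]
    _ ≤ ((n.factorial : ℝ) / δ^n) * (2 ^ ((n:ℝ) * θ - 1) * X) := by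
        apply mul_le_mul_of_nonneg_left _ (by positivity)
        exact mul_le_mul_of_nonneg_right h5 hX0.le
    _ = (n.factorial : ℝ) / δ^n * 2 ^ ((n:ℝ) * θ - 1) * X := by ring
  -- combine
  have hφ : ‖Complex.exp (-(w ^ (-(θ:ℂ))))‖ ≤ A * X := hnorm.trans hexp_bound
  have hφ0 : 0 ≤ ‖Complex.exp (-(w ^ (-(θ:ℂ))))‖ := norm_nonneg _
  have hK0 : 0 < K := by linarith
  have hcAK : 2 * c * A * K < 1 := by
    have e : 2 * c * A * K = c * (2*K*A+2) - 2 * c := by ring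
    rw [e, hcden]; linarith
  have key : 2 * c * ‖Complex.exp (-(w ^ (-(θ:ℂ))))‖ < X / K := by
    calc 2 * c * ‖Complex.exp (-(w ^ (-(θ:ℂ))))‖ ≤ 2 * c * (A * X) :=
          mul_le_mul_of_nonneg_left hφ (by positivity)
    _ < X / K := by
        rw [lt_div_iff₀ hK0]
        calc 2 * c * (A * X) * K = 2 * c * A * K * X := by ring
        _ < 1 * X := mul_lt_mul_of_pos_right hcAK hX0
        _ = X := one_mul X
  have hXK : X / K ≤ 1 - ‖χ z‖ := by
    rw [div_le_iff₀ hK0]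
    linarith [hχKz]
  linarith
end

section
/- If a point w = x + iy lies in the open disk D(1/2, 1/2) but outside the open disks D(1 + i/2, 1/2) and D(1 - i/2, 1/2), then 0 ≤ x ≤ 1 and |y| ≤ 2(1-x)². -/
open Complex Metric


theorem stmt_4 (w : ℂ)
    (h1 : w ∈ ball ((1 / 2 : ℂ)) (1 / 2))
    (h2 : w ∉ ball (1 + Complex.I / 2) (1 / 2))
    (h3 : w ∉ ball (1 - Complex.I / 2) (1 / 2)) :
    0 ≤ w.re ∧ w.re ≤ 1 ∧ |w.im| ≤ 2 * (1 - w.re) ^ 2 := by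
  rw [mem_ball, Complex.dist_eq] at h1 h2 h3
  push_neg at h2 h3
  set x := w.re with hx
  set y := w.im with hy
  have e1 : (x - 1/2)^2 + y^2 < 1/4 := by
    have h := Complex.sq_norm (w - 1/2)
    simp [Complex.normSq_apply, ← hx, ← hy] at h
    nlinarith [norm_nonneg (w - 1/2)]
  have e2 : 1/4 ≤ (x - 1)^2 + (y - 1/2)^2 := by
    have h := Complex.sq_norm (w - (1 + Complex.I/2))
    simp [Complex.normSq_apply, ← hx, ← hy] at h
    nlinarith [norm_nonneg (w - (1 + Complex.I/2))]
  have e3 : 1/4 ≤ (x - 1)^2 + (y + 1/2)^2 := by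
    have h := Complex.sq_norm (w - (1 - Complex.I/2))
    simp [Complex.normSq_apply, ← hx, ← hy] at h
    nlinarith [norm_nonneg (w - (1 - Complex.I/2))]
  refine ⟨by nlinarith [sq_nonneg y], by nlinarith [sq_nonneg y], ?_⟩
  rcases abs_cases y with ⟨h, hs⟩ | ⟨h, hs⟩ <;> rw [h]
  · rcases le_or_gt x (1/2) with hc | hc
    · nlinarith [sq_nonneg (y - 1/2), sq_nonneg (1 - x)]
    · nlinarith [sq_nonneg (1-x), mul_nonneg hs (by nlinarith : (0:ℝ) ≤ 1 - x)]
  · rcases le_or_gt x (1/2) with hc | hc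
    · nlinarith [sq_nonneg (y + 1/2), sq_nonneg (1 - x)]
    · nlinarith [sq_nonneg (1-x)]
end

section
/- Let f ∈ H²(D²) with ‖f‖ ≤ 1, k ≥ 0, and h_k(z) = (∂₂^k f)(z,z). Suppose a ∈ D and h_k^{(l)}(a) = 0 for all 0 ≤ l < n. Then for every 0 < ρ < 1 and every b with |b - a| ≤ (ρ/2)(1 - |a|), one has |h_k(b)| ≤ ρⁿ · k! · 4^{k+1}/(1-|a|)^{k+1}. -/
open Metric Function Filter

set_option maxHeartbeats 1000000

namespace Stmt9Aux

lemma choose_sq_le (j k : ℕ) : (j.choose k)^2 ≤ (2*j).choose (2*k) := by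
  have h : (2*j).choose (2*k)
      = ∑ ij ∈ Finset.HasAntidiagonal.antidiagonal (2*k), j.choose ij.1 * j.choose ij.2 := by
    rw [two_mul j, Nat.add_choose_eq]
  have hm : ((k, k) : ℕ×ℕ) ∈ Finset.HasAntidiagonal.antidiagonal (2*k) := by
    simp [two_mul]
  rw [h, sq]
  exact Finset.single_le_sum (f := fun ij : ℕ×ℕ => j.choose ij.1 * j.choose ij.2)
    (fun i _ => Nat.zero_le _) hm

lemma summable_df {K : ℕ} {s : ℝ} (h0 : 0 ≤ s) (h1 : s < 1) :
    Summable (fun j : ℕ => (j.descFactorial K : ℝ) * s^(j - K)) := by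
  rw [← summable_nat_add_iff K]
  have := summable_descFactorial_mul_geometric_of_norm_lt_one (R := ℝ) K
    (r := s) (by rwa [Real.norm_eq_abs, abs_of_nonneg h0])
  refine this.congr fun m => ?_
  simp

lemma summable_df' {K : ℕ} {s : ℝ} (h0 : 0 ≤ s) (h1 : s < 1) :
    Summable (fun j : ℕ => ((j+1).descFactorial (K+1) : ℝ) * s^(j - K)) := by
  rw [← summable_nat_add_iff K]
  have := summable_descFactorial_mul_geometric_of_norm_lt_one (R := ℝ) (K+1)
    (r := s) (by rwa [Real.norm_eq_abs, abs_of_nonneg h0])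
  refine this.congr fun m => ?_
  congr 2
  omega

lemma sq_sum_bound (K : ℕ) {r : ℝ} (h0 : 0 ≤ r) (h1 : r < 1) :
    Summable (fun j : ℕ => ((j.descFactorial K : ℝ))^2 * (r^2)^(j - K)) ∧
    ∑' j : ℕ, ((j.descFactorial K : ℝ))^2 * (r^2)^(j - K)
      ≤ (K.factorial : ℝ)^2 / (1-r)^(2*K+1) := by
  have hrn : ‖r‖ < 1 := by rwa [Real.norm_eq_abs, abs_of_nonneg h0]
  have hU : HasSum (fun m : ℕ => ((m + 2*K).choose (2*K) : ℝ) * r^m)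
      (1 / (1-r)^(2*K+1)) := hasSum_choose_mul_geometric_of_norm_lt_one (2*K) hrn
  set g : ℕ → ℝ := fun m => (K.factorial : ℝ)^2 * (((m + 2*K).choose (2*K) : ℝ) * r^m)
    with hg_def
  have hg : Summable g := hU.summable.mul_left _
  have hgnn : ∀ m, 0 ≤ g m := fun m => by positivity
  -- shifted f
  set fs : ℕ → ℝ := fun m => (((m+K).descFactorial K : ℝ))^2 * (r^2)^m with hfs_def
  have hfsle : ∀ m, fs m ≤ g (2*m) := by
    intro m
    have h1' : ((m+K).descFactorial K : ℝ)^2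
        ≤ (K.factorial : ℝ)^2 * ((2*(m+K)).choose (2*K) : ℝ) := by
      rw [Nat.descFactorial_eq_factorial_mul_choose]
      push_cast
      rw [mul_pow]
      have := choose_sq_le (m+K) K
      have h2 : ((m+K).choose K : ℝ)^2 ≤ ((2*(m+K)).choose (2*K) : ℝ) := by
        exact_mod_cast this
      nlinarith [sq_nonneg ((K.factorial : ℝ))]
    have h2 : ((r:ℝ)^2)^m = r^(2*m) := by rw [← pow_mul, mul_comm]
    have h3 : (2*(m+K)) = 2*m + 2*K := by ring
    calc fs m = ((m+K).descFactorial K : ℝ)^2 * (r^2)^m := rfl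
    _ ≤ (K.factorial : ℝ)^2 * ((2*(m+K)).choose (2*K) : ℝ) * (r^2)^m := by
        apply mul_le_mul_of_nonneg_right h1' (by positivity)
    _ = g (2*m) := by rw [hg_def, h2, h3]; ring
  have hinj : Function.Injective (fun m : ℕ => 2*m) := fun a b h => by dsimp at h; omega
  have hfs : Summable fs := by
    apply Summable.of_nonneg_of_le (fun m => by positivity) hfsle
    exact hg.comp_injective hinj
  have htsum_fs : ∑' m, fs m ≤ ∑' m, g m := by
    apply hfs.tsum_le_tsum_of_inj _ hinj (fun c _ => hgnn c) hfsle hg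
  have htg : ∑' m, g m = (K.factorial : ℝ)^2 * (1 / (1-r)^(2*K+1)) := by
    rw [hg_def, tsum_mul_left, hU.tsum_eq]
  -- unshift
  have hzero : ∀ j < K, ((j.descFactorial K : ℝ))^2 * (r^2)^(j - K) = 0 := by
    intro j hj
    rw [Nat.descFactorial_eq_zero_iff_lt.2 hj]
    norm_num
  have hsum : Summable (fun j : ℕ => ((j.descFactorial K : ℝ))^2 * (r^2)^(j - K)) := by
    rw [← summable_nat_add_iff K]
    refine hfs.congr fun m => ?_
    simp [hfs_def]
  constructor
  · exact hsum
  · have := hsum.sum_add_tsum_nat_add K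
    rw [← this]
    have h0' : (∑ i ∈ Finset.range K, ((i.descFactorial K : ℝ))^2 * (r^2)^(i - K)) = 0 := by
      apply Finset.sum_eq_zero
      intro i hi
      exact hzero i (Finset.mem_range.1 hi)
    rw [h0', zero_add]
    have heq : (∑' m, ((((m+K).descFactorial K : ℝ))^2 * (r^2)^(m + K - K))) = ∑' m, fs m := by
      congr 1 with m
      simp [hfs_def]
    rw [heq]
    calc ∑' m, fs m ≤ ∑' m, g m := htsum_fs
    _ = (K.factorial : ℝ)^2 * (1 / (1-r)^(2*K+1)) := htg
    _ = (K.factorial : ℝ)^2 / (1-r)^(2*K+1) := by ring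


lemma tsum_prod_mul_le {g₁ g₂ : ℕ → ℝ} (h₁ : Summable g₁) (h₂ : Summable g₂)
    (n₁ : ∀ i, 0 ≤ g₁ i) (n₂ : ∀ j, 0 ≤ g₂ j) :
    Summable (fun p : ℕ×ℕ => g₁ p.1 * g₂ p.2) ∧
    ∑' p : ℕ×ℕ, g₁ p.1 * g₂ p.2 ≤ (∑' i, g₁ i) * (∑' j, g₂ j) := by
  have hs : Summable (fun p : ℕ×ℕ => g₁ p.1 * g₂ p.2) :=
    h₁.mul_of_nonneg h₂ n₁ n₂
  refine ⟨hs, hs.tsum_le_of_sum_le ?_⟩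
  intro F
  have hsub : F ⊆ (F.image Prod.fst) ×ˢ (F.image Prod.snd) := by
    intro p hp
    exact Finset.mem_product.2 ⟨Finset.mem_image_of_mem _ hp, Finset.mem_image_of_mem _ hp⟩
  calc ∑ p ∈ F, g₁ p.1 * g₂ p.2
      ≤ ∑ p ∈ (F.image Prod.fst) ×ˢ (F.image Prod.snd), g₁ p.1 * g₂ p.2 := by
        apply Finset.sum_le_sum_of_subset_of_nonneg hsub
        intro p _ _; exact mul_nonneg (n₁ _) (n₂ _)
    _ = (∑ i ∈ F.image Prod.fst, g₁ i) * (∑ j ∈ F.image Prod.snd, g₂ j) := by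
        rw [Finset.sum_product, ← Finset.sum_mul_sum]
    _ ≤ (∑' i, g₁ i) * (∑' j, g₂ j) := by
        apply mul_le_mul (h₁.sum_le_tsum _ (fun i _ => n₁ i))
          (h₂.sum_le_tsum _ (fun j _ => n₂ j))
          (Finset.sum_nonneg (fun j _ => n₂ j)) (tsum_nonneg n₁)

lemma tsum_cs {A c : ℕ×ℕ → ℝ} (hA0 : ∀ p, 0 ≤ A p) (hc0 : ∀ p, 0 ≤ c p)
    (hA : Summable (fun p => A p^2)) (hA1 : ∑' p, A p^2 ≤ 1)
    (hc : Summable (fun p => c p^2)) {D : ℝ} (hD : ∑' p, c p^2 ≤ D)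
    (hs : Summable (fun p => A p * c p)) :
    ∑' p, A p * c p ≤ Real.sqrt D := by
  have hD0 : (0:ℝ) ≤ D := le_trans (tsum_nonneg (fun p => sq_nonneg (c p))) hD
  apply hs.tsum_le_of_sum_le
  intro F
  have h1 : (∑ p ∈ F, A p * c p)^2 ≤ (∑ p ∈ F, A p^2) * (∑ p ∈ F, c p^2) :=
    Finset.sum_mul_sq_le_sq_mul_sq F A c
  have h2 : (∑ p ∈ F, A p^2) ≤ 1 := le_trans (hA.sum_le_tsum F (fun p _ => sq_nonneg _)) hA1
  have h3 : (∑ p ∈ F, c p^2) ≤ D := le_trans (hc.sum_le_tsum F (fun p _ => sq_nonneg _)) hD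
  have h4 : (∑ p ∈ F, A p * c p)^2 ≤ D := by
    have hcnn : (0:ℝ) ≤ ∑ p ∈ F, c p^2 := Finset.sum_nonneg (fun p _ => sq_nonneg _)
    nlinarith
  have h5 : (0:ℝ) ≤ ∑ p ∈ F, A p * c p :=
    Finset.sum_nonneg (fun p _ => mul_nonneg (hA0 p) (hc0 p))
  exact (Real.le_sqrt h5 hD0).2 h4

lemma csq_bound (K : ℕ) {r : ℝ} (h0 : 0 ≤ r) (h1 : r < 1) :
    Summable (fun p : ℕ×ℕ => ((p.2.descFactorial K : ℝ) * (r^p.1 * r^(p.2-K)))^2) ∧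
    ∑' p : ℕ×ℕ, ((p.2.descFactorial K : ℝ) * (r^p.1 * r^(p.2-K)))^2
      ≤ ((K.factorial : ℝ) / (1-r)^(K+1))^2 := by
  have hr2 : (0:ℝ) ≤ r^2 := by positivity
  have hr2' : r^2 < 1 := by nlinarith
  have h₁ : Summable (fun i : ℕ => (r^2)^i) := summable_geometric_of_lt_one hr2 hr2'
  obtain ⟨h₂, h₂b⟩ := sq_sum_bound K h0 h1
  have hpt : ∀ p : ℕ×ℕ, ((p.2.descFactorial K : ℝ) * (r^p.1 * r^(p.2-K)))^2
      = (r^2)^p.1 * (((p.2.descFactorial K : ℝ))^2 * (r^2)^(p.2-K)) := fun p => by ring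
  obtain ⟨hsum, hle⟩ := tsum_prod_mul_le h₁ h₂ (fun i => by positivity) (fun j => by positivity)
  constructor
  · exact hsum.congr (fun p => (hpt p).symm)
  · rw [tsum_congr hpt]
    refine le_trans hle ?_
    have hg1 : ∑' i : ℕ, (r^2)^i = (1 - r^2)⁻¹ := tsum_geometric_of_lt_one hr2 hr2'
    have hne : (0:ℝ) < 1 - r := by nlinarith
    have step : (∑' i : ℕ, (r^2)^i) * (∑' j : ℕ, ((j.descFactorial K : ℝ))^2 * (r^2)^(j-K))
        ≤ (1-r)⁻¹ * ((K.factorial : ℝ)^2 / (1-r)^(2*K+1)) := by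
      apply mul_le_mul _ h₂b (tsum_nonneg (fun j => by positivity)) (by positivity)
      rw [hg1]
      apply inv_anti₀ hne
      nlinarith
    refine le_trans step (le_of_eq ?_)
    have hne' : (1-r) ≠ 0 := ne_of_gt hne
    rw [div_pow, ← pow_mul]
    field_simp
    ring

noncomputable section

variable {a : ℕ × ℕ → ℂ}

/-- the `k`-th differentiated term in `w`. -/
def term (a : ℕ × ℕ → ℂ) (k : ℕ) (z : ℂ) (p : ℕ × ℕ) (w : ℂ) : ℂ :=
  a p * z^p.1 * ((p.2.descFactorial k : ℂ) * w^(p.2 - k))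

lemma term_norm (k : ℕ) (z : ℂ) (p : ℕ × ℕ) (w : ℂ) :
    ‖term a k z p w‖ = ‖a p‖ * (‖z‖^p.1 * ((p.2.descFactorial k : ℝ) * ‖w‖^(p.2-k))) := by
  simp [term, norm_mul, norm_pow]
  ring

lemma norm_a_le (ha2 : Summable fun p => ‖a p‖^2) (ha1 : ∑' p, ‖a p‖^2 ≤ 1) (p : ℕ × ℕ) :
    ‖a p‖ ≤ 1 := by
  have h := ha2.le_tsum p (fun j _ => sq_nonneg _)
  nlinarith [norm_nonneg (a p)]

lemma term_summable_norm (ha2 : Summable fun p => ‖a p‖^2) (ha1 : ∑' p, ‖a p‖^2 ≤ 1)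
    (k : ℕ) {z w : ℂ} (hz : ‖z‖ < 1) (hw : ‖w‖ < 1) :
    Summable (fun p : ℕ × ℕ => ‖term a k z p w‖) := by
  have hu : Summable (fun p : ℕ × ℕ =>
      ‖z‖^p.1 * ((p.2.descFactorial k : ℝ) * ‖w‖^(p.2-k))) :=
    (summable_geometric_of_lt_one (norm_nonneg z) hz).mul_of_nonneg
      (summable_df (norm_nonneg w) hw)
      (Pi.le_def.mpr (fun i => by positivity)) (Pi.le_def.mpr (fun j => by positivity))
  have hle : ∀ p : ℕ × ℕ, ‖term a k z p w‖
      ≤ ‖z‖^p.1 * ((p.2.descFactorial k : ℝ) * ‖w‖^(p.2-k)) := by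
    intro p
    rw [term_norm]
    have := norm_a_le ha2 ha1 p
    have hnn : (0:ℝ) ≤ ‖z‖^p.1 * ((p.2.descFactorial k : ℝ) * ‖w‖^(p.2-k)) := by positivity
    nlinarith
  exact Summable.of_nonneg_of_le (fun p => norm_nonneg _) hle hu

lemma term_hasDerivAt (k : ℕ) (z : ℂ) (p : ℕ × ℕ) (w : ℂ) :
    HasDerivAt (fun w => term a k z p w) (term a (k+1) z p w) w := by
  by_cases hj : k < p.2
  · have h1 : (fun w : ℂ => term a k z p w)
        = fun w : ℂ => (a p * z^p.1 * (p.2.descFactorial k : ℂ)) * w^(p.2-k) := by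
      funext w; simp [term]; ring
    rw [h1]
    have h2 := (hasDerivAt_pow (p.2-k) w).const_mul (a p * z^p.1 * (p.2.descFactorial k : ℂ))
    refine h2.congr_deriv ?_
    have e1 : p.2 - k - 1 = p.2 - (k+1) := by omega
    have e2 : (p.2.descFactorial (k+1) : ℂ) = ((p.2 - k : ℕ) : ℂ) * (p.2.descFactorial k : ℂ) := by
      rw [Nat.descFactorial_succ]; push_cast; ring
    rw [term, e2, e1]
    ring
  · push_neg at hj
    have h0 : p.2 - k = 0 := by omega
    have h1 : (fun w : ℂ => term a k z p w)
        = fun _ : ℂ => a p * z^p.1 * ((p.2.descFactorial k : ℂ)) := by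
      funext w; simp [term, h0]
    have h2 : term a (k+1) z p w = 0 := by
      have h3 : p.2.descFactorial (k+1) = 0 := Nat.descFactorial_eq_zero_iff_lt.2 (by omega)
      show a p * z^p.1 * ((p.2.descFactorial (k+1) : ℂ) * w^(p.2-(k+1))) = 0
      rw [h3]
      simp
    rw [h1, h2]
    exact hasDerivAt_const _ _

lemma rep {F : ℂ → ℂ → ℂ} (hF : ∀ z₁ z₂ : ℂ, ‖z₁‖ < 1 → ‖z₂‖ < 1 →
      HasSum (fun p : ℕ × ℕ => a p * z₁ ^ p.1 * z₂ ^ p.2) (F z₁ z₂))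
    (ha2 : Summable fun p => ‖a p‖^2) (ha1 : ∑' p, ‖a p‖^2 ≤ 1)
    (k : ℕ) {z : ℂ} (hz : ‖z‖ < 1) :
    ∀ w : ℂ, ‖w‖ < 1 → iteratedDeriv k (F z) w = ∑' p : ℕ × ℕ, term a k z p w := by
  induction k with
  | zero =>
      intro w hw
      rw [iteratedDeriv_zero]
      have := (hF z w hz hw).tsum_eq
      rw [← this]
      apply tsum_congr
      intro p
      simp [term]
  | succ k ih =>
      intro w hw
      rw [iteratedDeriv_succ]
      have hwb : w ∈ ball (0:ℂ) 1 := by simpa [mem_ball_zero_iff] using hw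
      have hEv : iteratedDeriv k (F z) =ᶠ[nhds w] (fun y => ∑' p : ℕ × ℕ, term a k z p y) := by
        filter_upwards [isOpen_ball.mem_nhds hwb] with y hy
        exact ih y (mem_ball_zero_iff.1 hy)
      rw [hEv.deriv_eq]
      set s : ℝ := (1 + ‖w‖)/2 with hs_def
      have hs0 : 0 ≤ s := by positivity
      have hs1 : s < 1 := by rw [hs_def]; linarith
      have hws : w ∈ ball (0:ℂ) s := by
        rw [mem_ball_zero_iff, hs_def]; linarith
      have hu : Summable (fun p : ℕ × ℕ =>
          ‖z‖^p.1 * ((p.2.descFactorial (k+1) : ℝ) * s^(p.2-(k+1)))) :=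
        (summable_geometric_of_lt_one (norm_nonneg z) hz).mul_of_nonneg
          (summable_df hs0 hs1)
          (Pi.le_def.mpr (fun i => by positivity)) (Pi.le_def.mpr (fun j => by positivity))
      have hbd : ∀ (p : ℕ × ℕ) (y : ℂ), y ∈ ball (0:ℂ) s →
          ‖term a (k+1) z p y‖
            ≤ ‖z‖^p.1 * ((p.2.descFactorial (k+1) : ℝ) * s^(p.2-(k+1))) := by
        intro p y hy
        rw [term_norm]
        have hy' : ‖y‖ ≤ s := le_of_lt (mem_ball_zero_iff.1 hy)
        have h1 : ‖a p‖ ≤ 1 := norm_a_le ha2 ha1 p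
        have h2 : ‖y‖^(p.2-(k+1)) ≤ s^(p.2-(k+1)) := pow_le_pow_left₀ (norm_nonneg y) hy' _
        have h3 : (0:ℝ) ≤ ‖z‖^p.1 := by positivity
        have h4 : (0:ℝ) ≤ (p.2.descFactorial (k+1) : ℝ) := by positivity
        calc ‖a p‖ * (‖z‖^p.1 * ((p.2.descFactorial (k+1) : ℝ) * ‖y‖^(p.2-(k+1))))
            ≤ 1 * (‖z‖^p.1 * ((p.2.descFactorial (k+1) : ℝ) * s^(p.2-(k+1)))) := by
              apply mul_le_mul h1 _ (by positivity) zero_le_one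
              apply mul_le_mul_of_nonneg_left _ h3
              exact mul_le_mul_of_nonneg_left h2 h4
          _ = ‖z‖^p.1 * ((p.2.descFactorial (k+1) : ℝ) * s^(p.2-(k+1))) := one_mul _
      have hg0 : Summable (fun p : ℕ × ℕ => term a k z p w) :=
        (term_summable_norm ha2 ha1 k hz hw).of_norm
      have HD := hasDerivAt_tsum_of_isPreconnected hu isOpen_ball
        ((convex_ball (0:ℂ) s).isPreconnected)
        (fun p y _ => term_hasDerivAt k z p y) hbd hws hg0 hws
      exact HD.deriv


lemma hk_le {F : ℂ → ℂ → ℂ} (hF : ∀ z₁ z₂ : ℂ, ‖z₁‖ < 1 → ‖z₂‖ < 1 →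
      HasSum (fun p : ℕ × ℕ => a p * z₁ ^ p.1 * z₂ ^ p.2) (F z₁ z₂))
    (ha2 : Summable fun p => ‖a p‖^2) (ha1 : ∑' p, ‖a p‖^2 ≤ 1)
    (k : ℕ) {z : ℂ} (hz : ‖z‖ < 1) :
    ‖iteratedDeriv k (F z) z‖ ≤ (k.factorial : ℝ) / (1-‖z‖)^(k+1) := by
  rw [rep hF ha2 ha1 k hz z hz]
  set r : ℝ := ‖z‖ with hr_def
  have hr0 : 0 ≤ r := norm_nonneg z
  have hsn := term_summable_norm ha2 ha1 k hz hz
  have h1 : ‖∑' p : ℕ × ℕ, term a k z p z‖ ≤ ∑' p : ℕ × ℕ, ‖term a k z p z‖ :=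
    norm_tsum_le_tsum_norm hsn
  refine le_trans h1 ?_
  set c : ℕ × ℕ → ℝ := fun p => (p.2.descFactorial k : ℝ) * (r^p.1 * r^(p.2-k)) with hc_def
  have hnormeq : ∀ p : ℕ × ℕ, ‖term a k z p z‖ = ‖a p‖ * c p := by
    intro p
    rw [term_norm, hc_def]
    ring
  rw [tsum_congr hnormeq]
  obtain ⟨hcsq, hcsqb⟩ := csq_bound k hr0 hz
  have hs' : Summable (fun p : ℕ × ℕ => ‖a p‖ * c p) :=
    hsn.congr hnormeq
  have hcs := tsum_cs (fun p => norm_nonneg (a p)) (fun p => by positivity)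
    ha2 ha1 hcsq hcsqb hs'
  refine le_trans hcs (le_of_eq ?_)
  have h1r : (0:ℝ) < 1 - r := by linarith
  exact Real.sqrt_sq (div_nonneg (by positivity) (le_of_lt (pow_pos h1r _)))

lemma hk_diffat {F : ℂ → ℂ → ℂ} (hF : ∀ z₁ z₂ : ℂ, ‖z₁‖ < 1 → ‖z₂‖ < 1 →
      HasSum (fun p : ℕ × ℕ => a p * z₁ ^ p.1 * z₂ ^ p.2) (F z₁ z₂))
    (ha2 : Summable fun p => ‖a p‖^2) (ha1 : ∑' p, ‖a p‖^2 ≤ 1)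
    (k : ℕ) {hk : ℂ → ℂ} (hhk : ∀ z, hk z = iteratedDeriv k (F z) z)
    {z₀ : ℂ} (hz₀ : ‖z₀‖ < 1) :
    DifferentiableAt ℂ hk z₀ := by
  classical
  set φ : ℕ × ℕ → ℂ → ℂ := fun p z =>
    (a p * (p.2.descFactorial k : ℂ)) * z^(p.1 + (p.2 - k)) with hφ_def
  have hφdiag : ∀ (p : ℕ × ℕ) (z : ℂ), φ p z = term a k z p z := by
    intro p z
    simp only [hφ_def, term, pow_add]
    ring
  set s : ℝ := (1 + ‖z₀‖)/2 with hs_def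
  have hs0 : 0 < s := by positivity
  have hs1 : s < 1 := by rw [hs_def]; linarith
  have hz₀s : z₀ ∈ ball (0:ℂ) s := by rw [mem_ball_zero_iff, hs_def]; linarith
  -- the majorant
  set u : ℕ × ℕ → ℝ := fun p =>
    s⁻¹ * (((p.1+1) : ℝ) * s^p.1 * (((p.2+1).descFactorial (k+1) : ℝ) * s^(p.2-k))) with hu_def
  have hu : Summable u := by
    rw [hu_def]
    apply Summable.mul_left
    have h1 : Summable (fun i : ℕ => ((i+1) : ℝ) * s^i) := by
      have := summable_df' (K := 0) (le_of_lt hs0) hs1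
      simpa using this
    have h2 : Summable (fun j : ℕ => (((j+1).descFactorial (k+1) : ℝ) * s^(j-k))) :=
      summable_df' (le_of_lt hs0) hs1
    have := h1.mul_of_nonneg h2
      (Pi.le_def.mpr (fun i => by positivity)) (Pi.le_def.mpr (fun j => by positivity))
    exact this.congr (fun p => by ring)
  -- derivatives of each φ p
  have hφd : ∀ (p : ℕ × ℕ) (y : ℂ), HasDerivAt (φ p)
      ((a p * (p.2.descFactorial k : ℂ)) * (((p.1 + (p.2-k)) : ℕ) * y^(p.1 + (p.2-k) - 1))) y := by
    intro p y
    exact (hasDerivAt_pow _ y).const_mul _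
  -- bound on the derivatives
  have hφb : ∀ (p : ℕ × ℕ) (y : ℂ), y ∈ ball (0:ℂ) s →
      ‖(a p * (p.2.descFactorial k : ℂ)) * (((p.1 + (p.2-k)) : ℕ) * y^(p.1 + (p.2-k) - 1))‖
        ≤ u p := by
    intro p y hy
    obtain ⟨i, j⟩ := p
    set m := j - k with hm_def
    have hy' : ‖y‖ ≤ s := le_of_lt (mem_ball_zero_iff.1 hy)
    have ha' : ‖a (i, j)‖ ≤ 1 := norm_a_le ha2 ha1 _
    have hnorm : ‖(a (i,j) * (j.descFactorial k : ℂ)) * (((i + m) : ℕ) * y^(i + m - 1))‖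
        = ‖a (i,j)‖ * (j.descFactorial k : ℝ) * (((i+m) : ℝ) * ‖y‖^(i+m-1)) := by
      simp only [norm_mul, norm_pow, Complex.norm_natCast]
      push_cast
      ring
    rw [hnorm]
    rcases Nat.eq_zero_or_pos (i + m) with hN | hN
    · have hzc : ((i:ℝ) + (m:ℝ)) = 0 := by exact_mod_cast hN
      rw [hzc]
      simp only [zero_mul, mul_zero]
      rw [hu_def]; positivity
    · -- main estimate
      have hcoef : (j.descFactorial k : ℝ) * ((i+m) : ℝ)
          ≤ ((i+1) : ℝ) * ((j+1).descFactorial (k+1) : ℝ) := by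
        have hnat : (j.descFactorial k) * (i+m) ≤ (i+1) * ((j+1).descFactorial (k+1)) := by
          rw [Nat.succ_descFactorial_succ]
          have e1 : i + m ≤ (i+1) * (m+1) := by nlinarith
          calc (j.descFactorial k) * (i+m) ≤ (j.descFactorial k) * ((i+1)*(m+1)) :=
                Nat.mul_le_mul_left _ e1
            _ = (i+1) * ((m+1) * j.descFactorial k) := by ring
            _ ≤ (i+1) * ((j+1) * j.descFactorial k) := by
                apply Nat.mul_le_mul_left
                apply Nat.mul_le_mul_right
                omega
        exact_mod_cast hnat
      have hpow : ‖y‖^(i+m-1) ≤ s^i * s^m * s⁻¹ := by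
        have h1 : ‖y‖^(i+m-1) ≤ s^(i+m-1) := pow_le_pow_left₀ (norm_nonneg y) hy' _
        refine le_trans h1 (le_of_eq ?_)
        have h2 : s^(i+m-1) * s = s^(i+m) := by
          rw [← pow_succ]
          congr 1
          omega
        have h3 : s^i * s^m * s⁻¹ = s^(i+m) * s⁻¹ := by rw [pow_add]
        rw [h3, ← h2, mul_assoc, mul_inv_cancel₀ (ne_of_gt hs0), mul_one]
      have hdfnn : (0:ℝ) ≤ (j.descFactorial k : ℝ) := by positivity
      have step1 : ‖a (i,j)‖ * (j.descFactorial k : ℝ) * (((i+m) : ℝ) * ‖y‖^(i+m-1))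
          ≤ (j.descFactorial k : ℝ) * ((i+m) : ℝ) * (s^i * s^m * s⁻¹) := by
        have hb1 : ‖a (i,j)‖ * (j.descFactorial k : ℝ) ≤ (j.descFactorial k : ℝ) := by
          nlinarith [norm_nonneg (a (i,j))]
        have : (0:ℝ) ≤ ((i+m):ℝ) := by positivity
        calc ‖a (i,j)‖ * (j.descFactorial k : ℝ) * (((i+m) : ℝ) * ‖y‖^(i+m-1))
            ≤ (j.descFactorial k : ℝ) * (((i+m) : ℝ) * ‖y‖^(i+m-1)) := by
              apply mul_le_mul_of_nonneg_right hb1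
              positivity
          _ ≤ (j.descFactorial k : ℝ) * (((i+m) : ℝ) * (s^i * s^m * s⁻¹)) := by
              apply mul_le_mul_of_nonneg_left _ hdfnn
              exact mul_le_mul_of_nonneg_left hpow this
          _ = (j.descFactorial k : ℝ) * ((i+m) : ℝ) * (s^i * s^m * s⁻¹) := by ring
      refine le_trans step1 ?_
      rw [hu_def]
      have hsp : (0:ℝ) ≤ s^i * s^m * s⁻¹ := by positivity
      have := mul_le_mul_of_nonneg_right hcoef hsp
      refine le_trans this (le_of_eq ?_)
      rw [hm_def]
      ring
  -- summability at z₀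
  have hg0 : Summable (fun p : ℕ × ℕ => φ p z₀) := by
    have := (term_summable_norm ha2 ha1 k hz₀ hz₀).of_norm
    exact this.congr (fun p => (hφdiag p z₀).symm)
  have HD := hasDerivAt_tsum_of_isPreconnected hu isOpen_ball
    ((convex_ball (0:ℂ) s).isPreconnected) (fun p y _ => hφd p y) hφb hz₀s hg0 hz₀s
  have hdiff : DifferentiableAt ℂ (fun z => ∑' p : ℕ × ℕ, φ p z) z₀ := HD.differentiableAt
  apply hdiff.congr_of_eventuallyEq
  have hball : z₀ ∈ ball (0:ℂ) 1 := by simpa [mem_ball_zero_iff] using hz₀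
  filter_upwards [isOpen_ball.mem_nhds hball] with y hy
  have hy' : ‖y‖ < 1 := mem_ball_zero_iff.1 hy
  rw [hhk y, rep hF ha2 ha1 k hy' y hy']
  exact tsum_congr (fun p => (hφdiag p y).symm)

end
end Stmt9Aux


/-- `f : ℂ → ℂ → ℂ` belongs to the unit ball of the Hardy space `H²(𝔻²)` with
coefficient family `a`. -/
def InHardy2UnitBall (f : ℂ → ℂ → ℂ) (a : ℕ × ℕ → ℂ) : Prop :=
  Summable (fun p => ‖a p‖ ^ 2) ∧ (∑' p : ℕ × ℕ, ‖a p‖ ^ 2) ≤ 1 ∧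
    ∀ z₁ z₂ : ℂ, ‖z₁‖ < 1 → ‖z₂‖ < 1 →
      HasSum (fun p : ℕ × ℕ => a p * z₁ ^ p.1 * z₂ ^ p.2) (f z₁ z₂)

open Stmt9Aux in
theorem stmt_9 (f : ℂ → ℂ → ℂ) (a : ℕ × ℕ → ℂ) (hf : InHardy2UnitBall f a)
    (k n : ℕ) (hk : ℂ → ℂ) (hhk : ∀ z, hk z = iteratedDeriv k (f z) z)
    (A : ℂ) (hA : ‖A‖ < 1) (hvan : ∀ l, l < n → iteratedDeriv l hk A = 0)
    (ρ : ℝ) (hρ0 : 0 < ρ) (hρ1 : ρ < 1) (b : ℂ)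
    (hb : ‖b - A‖ ≤ ρ / 2 * (1 - ‖A‖)) :
    ‖hk b‖ ≤ ρ ^ n * ((k.factorial : ℝ) * 4 ^ (k + 1) / (1 - ‖A‖) ^ (k + 1)) := by
  obtain ⟨ha2, ha1, hF⟩ := hf
  set r0 : ℝ := 1 - ‖A‖ with hr0_def
  have hr0 : 0 < r0 := by rw [hr0_def]; linarith
  set R : ℝ := r0/2 with hR_def
  have hR : 0 < R := by positivity
  have hsub : ∀ z : ℂ, z ∈ ball A R → ‖z‖ < 1 := by
    intro z hz
    have h1 : ‖z - A‖ < R := mem_ball_iff_norm.1 hz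
    have h2 : ‖z‖ ≤ ‖z - A‖ + ‖A‖ := by
      calc ‖z‖ = ‖z - A + A‖ := by ring_nf
      _ ≤ ‖z - A‖ + ‖A‖ := norm_add_le _ _
    rw [hR_def, hr0_def] at h1
    linarith
  set C : ℝ := (k.factorial : ℝ) * 2^(k+1) / r0^(k+1) with hC_def
  have hCnn : 0 ≤ C := by positivity
  have hsup : ∀ z ∈ ball A R, ‖hk z‖ ≤ C := by
    intro z hz
    have h1 : ‖z‖ < 1 := hsub z hz
    rw [hhk z]
    refine le_trans (hk_le hF ha2 ha1 k h1) ?_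
    have h2 : R ≤ 1 - ‖z‖ := by
      have h3 : ‖z - A‖ < R := mem_ball_iff_norm.1 hz
      have h4 : ‖z‖ ≤ ‖z - A‖ + ‖A‖ := by
        calc ‖z‖ = ‖z - A + A‖ := by ring_nf
        _ ≤ ‖z - A‖ + ‖A‖ := norm_add_le _ _
      rw [hR_def, hr0_def] at h3 ⊢
      linarith
    have h5 : R^(k+1) ≤ (1-‖z‖)^(k+1) := pow_le_pow_left₀ (le_of_lt hR) h2 _
    have h6 : C = (k.factorial : ℝ)/R^(k+1) := by
      rw [hC_def, hR_def]
      rw [div_pow]; field_simp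
    rw [h6]
    exact div_le_div_of_nonneg_left (by positivity) (pow_pos hR _) h5
  have hdiffAt : ∀ z ∈ ball A R, DifferentiableAt ℂ hk z :=
    fun z hz => hk_diffat hF ha2 ha1 k hhk (hsub z hz)
  -- power series at A
  have hR4 : (0:ℝ) < R/2 := by positivity
  set R2 : NNReal := ⟨R/2, le_of_lt hR4⟩ with hR2_def
  have hcb : closedBall A ((R2 : ℝ)) ⊆ ball A R := by
    apply closedBall_subset_ball
    show R/2 < R
    linarith
  have hdOn : DifferentiableOn ℂ hk (closedBall A ((R2:ℝ))) :=
    fun z hz => (hdiffAt z (hcb hz)).differentiableWithinAt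
  have hR2pos : 0 < R2 := by
    rw [← NNReal.coe_pos]
    exact hR4
  have hps : HasFPowerSeriesOnBall hk (cauchyPowerSeries hk A (R2:ℝ)) A R2 :=
    hdOn.hasFPowerSeriesOnBall hR2pos
  set p : FormalMultilinearSeries ℂ ℂ ℂ := cauchyPowerSeries hk A (R2:ℝ) with hp_def
  have hpAt : HasFPowerSeriesAt hk p A := hps.hasFPowerSeriesAt
  have hcoeff : ∀ l, l < n → p.coeff l = 0 := by
    intro l hl
    have h1 := hps.factorial_smul (1:ℂ) l
    have h3 : iteratedFDeriv ℂ l hk A (fun _ => 1) = iteratedDeriv l hk A :=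
      (iteratedDeriv_eq_iteratedFDeriv).symm
    rw [h3, hvan l hl] at h1
    have h2 : (p l fun _ => (1:ℂ)) = p.coeff l := by
      rw [FormalMultilinearSeries.apply_eq_pow_smul_coeff, one_pow, one_smul]
    rw [h2] at h1
    have h4 : ((l.factorial : ℂ)) * p.coeff l = 0 := by
      rw [← h1, nsmul_eq_mul]
    rcases mul_eq_zero.1 h4 with h5 | h5
    · exfalso
      have : (l.factorial : ℂ) ≠ 0 := Nat.cast_ne_zero.2 (Nat.factorial_ne_zero l)
      exact this h5
    · exact h5
  set Fi : ℕ → ℂ → ℂ := fun i => (Function.swap dslope A)^[i] hk with hFi_def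
  have hsucc : ∀ i, Fi (i+1) = dslope (Fi i) A := by
    intro i
    rw [hFi_def]
    exact Function.iterate_succ_apply' _ _ _
  have hFps : ∀ i, HasFPowerSeriesAt (Fi i) (FormalMultilinearSeries.fslope^[i] p) A :=
    fun i => hpAt.has_fpower_series_iterate_dslope_fslope i
  have hF0 : ∀ i, i < n → Fi i A = 0 := by
    intro i hi
    have h1 := (hFps i).coeff_zero (fun _ => (1:ℂ))
    have h2 : ((FormalMultilinearSeries.fslope^[i] p) 0 fun _ => (1:ℂ))
        = (FormalMultilinearSeries.fslope^[i] p).coeff 0 := by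
      rw [FormalMultilinearSeries.apply_eq_pow_smul_coeff, one_pow, one_smul]
    rw [h2, FormalMultilinearSeries.coeff_iterate_fslope, zero_add, hcoeff i hi] at h1
    exact h1.symm
  have hFdiff : ∀ i, ∀ z ∈ ball A R, DifferentiableAt ℂ (Fi i) z := by
    intro i
    induction i with
    | zero =>
        intro z hz
        have : Fi 0 = hk := rfl
        rw [this]
        exact hdiffAt z hz
    | succ i ih =>
        intro z hz
        rcases eq_or_ne z A with rfl | hne
        · exact (hFps (i+1)).differentiableAt
        · rw [hsucc i]
          exact (differentiableAt_dslope_of_ne hne).2 (ih z hz)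
  have hFbound : ∀ i, i ≤ n → ∀ z ∈ ball A R, ‖Fi i z‖ ≤ C / R^i := by
    intro i
    induction i with
    | zero =>
        intro _ z hz
        have : Fi 0 = hk := rfl
        rw [this]
        simpa using hsup z hz
    | succ i ih =>
        intro hin z hz
        have hi_lt : i < n := lt_of_lt_of_le (Nat.lt_succ_self i) hin
        have hFiA : Fi i A = 0 := hF0 i hi_lt
        have hFiDiffOn : DifferentiableOn ℂ (Fi i) (ball A R) :=
          fun w hw => (hFdiff i w hw).differentiableWithinAt
        have key : ∀ ε : ℝ, 0 < ε → ‖Fi (i+1) z‖ ≤ (C/R^i + ε)/R := by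
          intro ε hε
          have hmaps : Set.MapsTo (Fi i) (ball A R) (ball (Fi i A) (C/R^i + ε)) := by
            intro w hw
            rw [hFiA, mem_ball_zero_iff]
            exact lt_of_le_of_lt (ih (le_of_lt hi_lt) w hw) (lt_add_of_pos_right _ hε)
          have h1 := Complex.norm_dslope_le_div_of_mapsTo_ball hFiDiffOn (hmaps.mono_right ball_subset_closedBall) hz
          rw [hsucc i]
          exact h1
        have h2 : ‖Fi (i+1) z‖ * R ≤ C/R^i := by
          apply le_of_forall_pos_le_add
          intro ε hε
          have h3 := key ε hε
          calc ‖Fi (i+1) z‖ * R ≤ ((C/R^i + ε)/R) * R :=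
                mul_le_mul_of_nonneg_right h3 (le_of_lt hR)
          _ = C/R^i + ε := div_mul_cancel₀ _ (ne_of_gt hR)
        have h4 : C/R^(i+1) = (C/R^i)/R := by
          rw [pow_succ, ← div_div]
        rw [h4]
        exact (le_div_iff₀ hR).2 h2
  have hfac : ∀ i, i ≤ n → ∀ z : ℂ, hk z = (z - A)^i * Fi i z := by
    intro i
    induction i with
    | zero =>
        intro _ z
        have : Fi 0 = hk := rfl
        rw [this]
        simp
    | succ i ih =>
        intro hin z
        have hi_lt : i < n := lt_of_lt_of_le (Nat.lt_succ_self i) hin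
        have h1 := ih (le_of_lt hi_lt) z
        have h2 := sub_smul_dslope (Fi i) A z
        rw [hF0 i hi_lt, sub_zero, smul_eq_mul] at h2
        rw [h1, ← h2, hsucc i, pow_succ]
        ring
  -- final computation
  have hbA : ‖b - A‖ ≤ ρ * R := by
    rw [hR_def, hr0_def]
    calc ‖b - A‖ ≤ ρ/2 * (1 - ‖A‖) := hb
    _ = ρ * ((1 - ‖A‖)/2) := by ring
  have hbmem : b ∈ ball A R := by
    rw [mem_ball_iff_norm]
    have : ρ * R < R := by nlinarith
    linarith
  have h5 : ‖hk b‖ = ‖b - A‖^n * ‖Fi n b‖ := by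
    rw [hfac n le_rfl b, norm_mul, norm_pow]
  have h6 : ‖b - A‖^n ≤ (ρ*R)^n := pow_le_pow_left₀ (norm_nonneg _) hbA n
  have h7 : ‖Fi n b‖ ≤ C/R^n := hFbound n le_rfl b hbmem
  have h8 : ‖hk b‖ ≤ (ρ*R)^n * (C/R^n) := by
    rw [h5]
    exact mul_le_mul h6 h7 (norm_nonneg _) (by positivity)
  have h9 : (ρ*R)^n * (C/R^n) = ρ^n * C := by
    rw [mul_pow]
    field_simp
  have hCM : C ≤ (k.factorial : ℝ) * 4 ^ (k + 1) / r0 ^ (k + 1) := by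
    rw [hC_def]
    gcongr
    norm_num
  calc ‖hk b‖ ≤ (ρ*R)^n * (C/R^n) := h8
  _ = ρ^n * C := h9
  _ ≤ ρ ^ n * ((k.factorial : ℝ) * 4 ^ (k + 1) / r0 ^ (k + 1)) :=
      mul_le_mul_of_nonneg_left hCM (pow_nonneg (le_of_lt hρ0) n)
end
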